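/- arXiv:2407.04889 — 2 statements merged into one kernel-verified Lean document; each statement's English description precedes it below -/
import Mathlib

section
/- Fix η > 0, A ∈ ℝ^{n×m} and T ∈ ℕ. For every x ∈ Δ_n, the discrete-time reward of the constant strategy x(t) = x for t = 0, …, T−1 against the MWU learner with step η and zero initial history is at least the continuous-time reward of the constant strategy x(t) = x for t ∈ [0,T] against the Replicator Dynamics with the same η and zero initial history; that is, Σ_{t=0}^{T−1} f(t) ≥ ∫_0^T f(t) dt, where f(t) = ( Σ_{i=1}^m exp(−η·t·x^⊤A e_i)·x^⊤A e_i ) / ( Σ_{i=1}^m exp(−η·t·x^⊤A e_i) ). Consequently, R*_disc(0, T) ≥ R*_cont(0, T). -/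
open MeasureTheory

/-- Componentwise cumulative play of a continuous-time strategy: `∫_0^t x(s) ds`. -/
noncomputable def cumX {n : ℕ} (x : ℝ → Fin n → ℝ) (t : ℝ) (k : Fin n) : ℝ :=
  ∫ s in (0:ℝ)..t, x s k

/-- The Replicator Dynamics learner's mixed strategy at time `t`. -/
noncomputable def contPlay {n m : ℕ} (η : ℝ) (A : Matrix (Fin n) (Fin m) ℝ)
    (h0 : Fin m → ℝ) (x : ℝ → Fin n → ℝ) (t : ℝ) (i : Fin m) : ℝ :=
  Real.exp (η * (h0 i - ∑ k, cumX x t k * A k i)) /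
    ∑ j, Real.exp (η * (h0 j - ∑ k, cumX x t k * A k j))

/-- The optimizer's continuous-time reward against the Replicator Dynamics. -/
noncomputable def Rcont {n m : ℕ} (η : ℝ) (A : Matrix (Fin n) (Fin m) ℝ)
    (h0 : Fin m → ℝ) (T : ℝ) (x : ℝ → Fin n → ℝ) : ℝ :=
  ∫ t in (0:ℝ)..T, ∑ k, ∑ i, x t k * A k i * contPlay η A h0 x t i

/-- The optimal continuous-time reward. -/
noncomputable def RcontStar {n m : ℕ} (η : ℝ) (A : Matrix (Fin n) (Fin m) ℝ)
    (h0 : Fin m → ℝ) (T : ℝ) : ℝ :=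
  sSup {r | ∃ x : ℝ → Fin n → ℝ, Measurable x ∧
    (∀ t ∈ Set.Icc (0:ℝ) T, x t ∈ stdSimplex ℝ (Fin n)) ∧ r = Rcont η A h0 T x}

/-- The MWU learner's mixed strategy at round `t`, with step `η`, initial history `h0`,
against the optimizer's past plays `x 0, …, x (t−1)` (learner matrix `−A`). -/
noncomputable def discPlay {n m : ℕ} (η : ℝ) (A : Matrix (Fin n) (Fin m) ℝ)
    (h0 : Fin m → ℝ) (x : ℕ → Fin n → ℝ) (t : ℕ) (i : Fin m) : ℝ :=
  Real.exp (η * (h0 i - ∑ s ∈ Finset.range t, ∑ k, x s k * A k i)) /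
    ∑ j, Real.exp (η * (h0 j - ∑ s ∈ Finset.range t, ∑ k, x s k * A k j))

/-- The optimizer's discrete-time reward over `T` rounds against the MWU learner. -/
noncomputable def Rdisc {n m : ℕ} (η : ℝ) (A : Matrix (Fin n) (Fin m) ℝ)
    (h0 : Fin m → ℝ) (T : ℕ) (x : ℕ → Fin n → ℝ) : ℝ :=
  ∑ t ∈ Finset.range T, ∑ k, ∑ i, x t k * A k i * discPlay η A h0 x t i

/-- The optimal discrete-time reward. -/
noncomputable def RdiscStar {n m : ℕ} (η : ℝ) (A : Matrix (Fin n) (Fin m) ℝ)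
    (h0 : Fin m → ℝ) (T : ℕ) : ℝ :=
  sSup {r | ∃ x : ℕ → Fin n → ℝ, (∀ t, x t ∈ stdSimplex ℝ (Fin n)) ∧
    r = Rdisc η A h0 T x}

/-!
Let `Φ(ℓ) = -η⁻¹ log Σⱼ exp(-η ℓⱼ)`. The learner's play at cumulative loss `ℓ`, in both the
MWU and the Replicator Dynamics, is `softmax(-η ℓ) = ∇Φ(ℓ)`, and `Φ` is concave because
log-sum-exp is convex. Against a continuous-time strategy with cumulative play `X`, the reward is
therefore the growth of `Φ(X A)`, so `R_cont(x) ≤ Φ(X(T) A) - Φ(0)`, which depends only on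
`X(T) = T z` with `z ∈ Δ_n`. In discrete time, concavity bounds `Φ((t+1) zA) - Φ(t zA)` by
`∇Φ(t zA) ⬝ zA`, the reward of round `t` of the constant strategy `z`; telescoping gives
`Φ(T zA) - Φ(0) ≤ R_disc(z)`.
-/

open Set Matrix

section Softmax

variable {κ : Type*} [Fintype κ]

noncomputable def softmax (a : κ → ℝ) (j : κ) : ℝ :=
  Real.exp (a j) / ∑ i, Real.exp (a i)

lemma sum_exp_pos (a : κ → ℝ) (j : κ) : 0 < ∑ i, Real.exp (a i) :=
  Finset.sum_pos (fun i _ => Real.exp_pos (a i)) ⟨j, Finset.mem_univ j⟩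

lemma softmax_nonneg (a : κ → ℝ) (j : κ) : 0 ≤ softmax a j :=
  div_nonneg (Real.exp_pos _).le (sum_exp_pos a j).le

lemma softmax_le_one (a : κ → ℝ) (j : κ) : softmax a j ≤ 1 :=
  div_le_one_of_le₀ (Finset.single_le_sum (fun i _ => (Real.exp_pos (a i)).le)
    (Finset.mem_univ j)) (sum_exp_pos a j).le

lemma sum_softmax [Nonempty κ] (a : κ → ℝ) : ∑ j, softmax a j = 1 := by
  obtain ⟨j⟩ := ‹Nonempty κ›
  simp only [softmax]
  rw [← Finset.sum_div, div_self (sum_exp_pos a j).ne']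

lemma continuous_softmax : Continuous (softmax : (κ → ℝ) → κ → ℝ) :=
  continuous_pi fun j => ((continuous_apply j).rexp).div
    (continuous_finsetSum _ fun i _ => (continuous_apply i).rexp) fun a => (sum_exp_pos a j).ne'

/-- Convexity of log-sum-exp, with `softmax a` as its gradient at `a`. -/
lemma log_sum_exp_add_dotProduct_softmax_le (a δ : κ → ℝ) :
    Real.log (∑ j, Real.exp (a j)) + softmax a ⬝ᵥ δ ≤ Real.log (∑ j, Real.exp (a j + δ j)) := by
  rcases isEmpty_or_nonempty κ with hκ | hκ
  · simp
  have hS := sum_exp_pos a (Classical.arbitrary κ)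
  have hsplit : ∑ i, Real.exp (a i + δ i)
      = (∑ i, Real.exp (a i)) * ∑ i, softmax a i * Real.exp (δ i) := by
    rw [Finset.mul_sum]
    refine Finset.sum_congr rfl fun i _ => ?_
    rw [softmax, Real.exp_add]
    field_simp
  have hjensen : Real.exp (softmax a ⬝ᵥ δ) ≤ ∑ i, softmax a i * Real.exp (δ i) :=
    convexOn_exp.map_sum_le (fun i _ => softmax_nonneg a i) (sum_softmax a) (fun i _ => mem_univ _)
  have hpos : 0 < ∑ i, softmax a i * Real.exp (δ i) :=
    (Real.exp_pos _).trans_le hjensen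
  rw [hsplit, Real.log_mul hS.ne' hpos.ne', add_le_add_iff_left]
  exact (Real.le_log_iff_exp_le hpos).2 hjensen

end Softmax

section Potential

variable {κ : Type*} [Fintype κ] {η : ℝ}

noncomputable def mwuStrategy (η : ℝ) (ℓ : κ → ℝ) : κ → ℝ :=
  softmax fun j => -(η * ℓ j)

noncomputable def mwuPotential (η : ℝ) (ℓ : κ → ℝ) : ℝ :=
  -Real.log (∑ j, Real.exp (-(η * ℓ j))) / η

lemma continuous_mwuStrategy : Continuous (mwuStrategy η : (κ → ℝ) → κ → ℝ) :=
  continuous_softmax.comp (continuous_pi fun j => by fun_prop)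

lemma mwuPotential_sub_le (hη : 0 < η) (ℓ ℓ' : κ → ℝ) :
    mwuPotential η ℓ' - mwuPotential η ℓ ≤ mwuStrategy η ℓ ⬝ᵥ (ℓ' - ℓ) := by
  have h := log_sum_exp_add_dotProduct_softmax_le (fun j => -(η * ℓ j)) (-η • (ℓ' - ℓ))
  have hadd : ∀ j, -(η * ℓ j) + (-η • (ℓ' - ℓ)) j = -(η * ℓ' j) := fun j => by
    simp only [Pi.smul_apply, Pi.sub_apply, smul_eq_mul]; ring
  simp only [hadd, dotProduct_smul, smul_eq_mul] at h
  rw [mwuPotential, mwuPotential, div_sub_div_same, div_le_iff₀ hη, mwuStrategy]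
  linarith

lemma mwuPotential_natCast_smul_sub_le_sum (hη : 0 < η) (ℓ : κ → ℝ) (T : ℕ) :
    mwuPotential η ((T : ℝ) • ℓ) - mwuPotential η (0 : κ → ℝ)
      ≤ ∑ t ∈ Finset.range T, mwuStrategy η ((t : ℝ) • ℓ) ⬝ᵥ ℓ := by
  have htelescope := Finset.sum_range_sub (fun t : ℕ => mwuPotential η ((t : ℝ) • ℓ)) T
  simp only [Nat.cast_zero, zero_smul] at htelescope
  rw [← htelescope]
  refine Finset.sum_le_sum fun t _ => ?_
  have h := mwuPotential_sub_le hη ((t : ℝ) • ℓ) (((t + 1 : ℕ) : ℝ) • ℓ)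
  rw [Nat.cast_succ, add_smul, one_smul] at h ⊢
  rwa [add_sub_cancel_left] at h

lemma mwuStrategy_smul_dotProduct (η t : ℝ) (ℓ : κ → ℝ) :
    mwuStrategy η (t • ℓ) ⬝ᵥ ℓ
      = (∑ i, Real.exp (-(η * t * ℓ i)) * ℓ i) / ∑ i, Real.exp (-(η * t * ℓ i)) := by
  simp only [mwuStrategy, softmax, dotProduct, Pi.smul_apply, smul_eq_mul, ← mul_assoc,
    Finset.sum_div, div_mul_eq_mul_div]

end Potential

lemma intervalIntegral_le_sub_of_forall_short {f F : ℝ → ℝ} {a b : ℝ} (hab : a ≤ b)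
    (hf : IntervalIntegrable f volume a b)
    (hshort : ∀ ε > 0, ∃ δ > 0, ∀ s u, a ≤ s → s ≤ u → u ≤ b → u - s < δ →
      ∫ t in s..u, f t ≤ F u - F s + ε * (u - s)) :
    ∫ t in a..b, f t ≤ F b - F a := by
  refine le_of_forall_pos_le_add fun ε hε => ?_
  obtain ⟨δ, hδ, hloc⟩ := hshort (ε / (b - a + 1)) (by have := sub_nonneg.2 hab; positivity)
  obtain ⟨N, hN⟩ := exists_nat_gt ((b - a) / δ)
  have hN0 : (0 : ℝ) < N := (div_nonneg (sub_nonneg.2 hab) hδ.le).trans_lt hN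
  set h := (b - a) / N with hh
  have hh0 : 0 ≤ h := div_nonneg (sub_nonneg.2 hab) hN0.le
  have hhδ : h < δ := by rw [hh, div_lt_iff₀ hN0]; rwa [div_lt_iff₀ hδ, mul_comm] at hN
  have hNh : N * h = b - a := by rw [hh]; field_simp
  set p : ℕ → ℝ := fun k => a + k * h with hp
  have hp_mem : ∀ k ≤ N, p k ∈ Icc a b := fun k hk => by
    refine ⟨le_add_of_nonneg_right (by positivity), ?_⟩
    have : (k : ℝ) * h ≤ N * h := mul_le_mul_of_nonneg_right (by exact_mod_cast hk) hh0
    simp only [hp]; linarith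
  have hp_succ : ∀ k, p (k + 1) = p k + h := fun k => by simp only [hp]; push_cast; ring
  have hpiece : ∀ k < N, IntervalIntegrable f volume (p k) (p (k + 1)) := fun k hk =>
    hf.mono_set (uIcc_subset_uIcc (by rw [uIcc_of_le hab]; exact hp_mem k hk.le)
      (by rw [uIcc_of_le hab]; exact hp_mem (k + 1) hk))
  calc ∫ t in a..b, f t = ∑ k ∈ Finset.range N, ∫ t in p k..p (k + 1), f t := by
        rw [intervalIntegral.sum_integral_adjacent_intervals hpiece]
        simp only [hp, Nat.cast_zero, zero_mul, add_zero, hNh, add_sub_cancel]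
    _ ≤ ∑ k ∈ Finset.range N, (F (p (k + 1)) - F (p k) + ε / (b - a + 1) * h) := by
        refine Finset.sum_le_sum fun k hk => ?_
        have hk := Finset.mem_range.1 hk
        have := hloc (p k) (p (k + 1)) (hp_mem k hk.le).1 (by rw [hp_succ]; linarith)
          (hp_mem (k + 1) hk).2 (by rw [hp_succ]; linarith)
        rw [hp_succ, add_sub_cancel_left] at this
        rwa [hp_succ]
    _ = F b - F a + ε * ((b - a) / (b - a + 1)) := by
        rw [Finset.sum_add_distrib, Finset.sum_range_sub (fun k => F (p k)), Finset.sum_const,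
          Finset.card_range, nsmul_eq_mul]
        simp only [hp, Nat.cast_zero, zero_mul, add_zero]
        rw [mul_left_comm, hNh, add_sub_cancel]
        ring
    _ ≤ F b - F a + ε := by
        gcongr
        exact mul_le_of_le_one_right hε.le
          ((div_le_one (by linarith)).2 (by linarith))

lemma dotProduct_le_norm_of_mem_stdSimplex {ι : Type*} [Fintype ι] {p : ι → ℝ}
    (hp : p ∈ stdSimplex ℝ ι) (w : ι → ℝ) : p ⬝ᵥ w ≤ ‖w‖ :=
  calc p ⬝ᵥ w ≤ ∑ i, p i * ‖w‖ := Finset.sum_le_sum fun i _ =>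
        mul_le_mul_of_nonneg_left ((le_abs_self _).trans (norm_le_pi_norm w i)) (hp.1 i)
    _ = ‖w‖ := by rw [← Finset.sum_mul, hp.2, one_mul]

section CumulativePlay

variable {n : ℕ} {x : ℝ → Fin n → ℝ} {T : ℝ}

lemma integrableOn_apply_of_mem_stdSimplex (hx : Measurable x)
    (hxs : ∀ t ∈ Icc 0 T, x t ∈ stdSimplex ℝ (Fin n)) (k : Fin n) :
    IntegrableOn (fun t => x t k) (Icc 0 T) :=
  Measure.integrableOn_of_bounded (M := 1) measure_Icc_lt_top.ne
    ((measurable_pi_apply k).comp hx).aestronglyMeasurable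
    (ae_restrict_of_forall_mem measurableSet_Icc fun t ht => by
      rw [Real.norm_eq_abs, abs_le]
      exact ⟨by linarith [(hxs t ht).1 k], (mem_Icc_of_mem_stdSimplex (hxs t ht) k).2⟩)

lemma intervalIntegrable_apply_of_mem_stdSimplex (hx : Measurable x)
    (hxs : ∀ t ∈ Icc 0 T, x t ∈ stdSimplex ℝ (Fin n)) (k : Fin n) {a b : ℝ}
    (ha : a ∈ Icc 0 T) (hb : b ∈ Icc 0 T) :
    IntervalIntegrable (fun t => x t k) volume a b :=
  ((integrableOn_apply_of_mem_stdSimplex hx hxs k).mono_set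
    (uIcc_subset_Icc ha hb)).intervalIntegrable

lemma cumX_sub_cumX (hx : Measurable x) (hxs : ∀ t ∈ Icc 0 T, x t ∈ stdSimplex ℝ (Fin n))
    (k : Fin n) {a b : ℝ} (ha : a ∈ Icc 0 T) (hb : b ∈ Icc 0 T) :
    cumX x b k - cumX x a k = ∫ t in a..b, x t k :=
  have h0 : (0 : ℝ) ∈ Icc 0 T := ⟨le_rfl, ha.1.trans ha.2⟩
  intervalIntegral.integral_interval_sub_left
    (intervalIntegrable_apply_of_mem_stdSimplex hx hxs k h0 hb)
    (intervalIntegrable_apply_of_mem_stdSimplex hx hxs k h0 ha)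

lemma continuousOn_cumX (hx : Measurable x) (hxs : ∀ t ∈ Icc 0 T, x t ∈ stdSimplex ℝ (Fin n))
    (hT : 0 ≤ T) : ContinuousOn (cumX x) (Icc 0 T) := by
  refine continuousOn_pi.2 fun k => ?_
  rw [← uIcc_of_le hT]
  exact intervalIntegral.continuousOn_primitive_interval
    (by rw [uIcc_of_le hT]; exact integrableOn_apply_of_mem_stdSimplex hx hxs k)

lemma intervalIntegrable_dotProduct (hx : Measurable x)
    (hxs : ∀ t ∈ Icc 0 T, x t ∈ stdSimplex ℝ (Fin n)) {g : ℝ → Fin n → ℝ} {a b : ℝ}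
    (ha : a ∈ Icc 0 T) (hb : b ∈ Icc 0 T) (hg : ContinuousOn g (uIcc a b)) :
    IntervalIntegrable (fun t => x t ⬝ᵥ g t) volume a b := by
  rw [show (fun t => x t ⬝ᵥ g t) = ∑ k, fun t => x t k * g t k by ext t; simp [dotProduct]]
  exact IntervalIntegrable.sum Finset.univ fun k _ =>
    (intervalIntegrable_apply_of_mem_stdSimplex hx hxs k ha hb).mul_continuousOn
      ((continuous_apply k).comp_continuousOn hg)

lemma integral_dotProduct_const (hx : Measurable x)
    (hxs : ∀ t ∈ Icc 0 T, x t ∈ stdSimplex ℝ (Fin n)) (w : Fin n → ℝ) {a b : ℝ}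
    (ha : a ∈ Icc 0 T) (hb : b ∈ Icc 0 T) :
    ∫ t in a..b, x t ⬝ᵥ w = (cumX x b - cumX x a) ⬝ᵥ w := by
  simp only [dotProduct]
  rw [intervalIntegral.integral_finsetSum fun k _ =>
    (intervalIntegrable_apply_of_mem_stdSimplex hx hxs k ha hb).mul_const (w k)]
  refine Finset.sum_congr rfl fun k _ => ?_
  rw [intervalIntegral.integral_mul_const, Pi.sub_apply, cumX_sub_cumX hx hxs k ha hb]

lemma exists_cumX_eq_smul (hx : Measurable x) (hxs : ∀ t ∈ Icc 0 T, x t ∈ stdSimplex ℝ (Fin n))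
    (hT : 0 ≤ T) : ∃ z ∈ stdSimplex ℝ (Fin n), cumX x T = T • z := by
  rcases hT.eq_or_lt with rfl | hT
  · exact ⟨x 0, hxs 0 ⟨le_rfl, le_rfl⟩, funext fun k => by simp [cumX]⟩
  refine ⟨T⁻¹ • cumX x T, ⟨fun k => ?_, ?_⟩, by rw [smul_smul, mul_inv_cancel₀ hT.ne', one_smul]⟩
  · exact mul_nonneg (inv_nonneg.2 hT.le)
      (intervalIntegral.integral_nonneg hT.le fun t ht => (hxs t ht).1 k)
  · have h0 : (0 : ℝ) ∈ Icc 0 T := ⟨le_rfl, hT.le⟩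
    have hT' : T ∈ Icc 0 T := ⟨hT.le, le_rfl⟩
    have hsum : ∑ k, cumX x T k = T := by
      simp only [cumX]
      rw [← intervalIntegral.integral_finsetSum fun k _ =>
        intervalIntegrable_apply_of_mem_stdSimplex hx hxs k h0 hT']
      rw [intervalIntegral.integral_congr fun t ht => (hxs t (by rwa [uIcc_of_le hT.le] at ht)).2]
      simp
    simp only [Pi.smul_apply, smul_eq_mul, ← Finset.mul_sum, hsum, inv_mul_cancel₀ hT.ne']

lemma cumX_const (z : Fin n → ℝ) (t : ℝ) : cumX (fun _ => z) t = t • z :=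
  funext fun k => by simp [cumX]

end CumulativePlay

section Rewards

variable {n : ℕ} {κ : Type*} [Fintype κ] {η : ℝ}

/-- By concavity of `mwuPotential`, its increment over `[s, u]` dominates the reward with the
learner's play frozen at `u`; freezing costs `o(u - s)` by uniform continuity. -/
lemma integral_dotProduct_mwuStrategy_le (hη : 0 < η) (A : Matrix (Fin n) κ ℝ)
    {x : ℝ → Fin n → ℝ} {T : ℝ} (hT : 0 ≤ T) (hx : Measurable x)
    (hxs : ∀ t ∈ Icc 0 T, x t ∈ stdSimplex ℝ (Fin n)) :
    ∫ t in (0 : ℝ)..T, x t ⬝ᵥ A *ᵥ mwuStrategy η (cumX x t ᵥ* A)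
      ≤ mwuPotential η (cumX x T ᵥ* A) - mwuPotential η (0 : κ → ℝ) := by
  set g : ℝ → Fin n → ℝ := fun t => A *ᵥ mwuStrategy η (cumX x t ᵥ* A)
  have hg : ContinuousOn g (Icc 0 T) :=
    (continuous_const.matrix_mulVec (continuous_mwuStrategy.comp
      (continuous_id.matrix_vecMul continuous_const))).comp_continuousOn
      (continuousOn_cumX hx hxs hT)
  have hint : ∀ {s u}, s ∈ Icc 0 T → u ∈ Icc 0 T →
      IntervalIntegrable (fun t => x t ⬝ᵥ g t) volume s u := fun hs hu =>
    intervalIntegrable_dotProduct hx hxs hs hu (hg.mono (uIcc_subset_Icc hs hu))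
  have hcum0 : cumX x 0 = 0 := funext fun k => intervalIntegral.integral_same
  have key := intervalIntegral_le_sub_of_forall_short hT
    (F := fun t => mwuPotential η (cumX x t ᵥ* A)) (hint ⟨le_rfl, hT⟩ ⟨hT, le_rfl⟩) ?_
  · simpa only [hcum0, zero_vecMul] using key
  intro ε hε
  obtain ⟨δ, hδ, hδg⟩ := Metric.uniformContinuousOn_iff_le.1
    (isCompact_Icc.uniformContinuousOn_of_continuous hg) ε hε
  refine ⟨δ, hδ, fun s u hs hsu hu hsuδ => ?_⟩
  have hsI : s ∈ Icc 0 T := ⟨hs, hsu.trans hu⟩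
  have huI : u ∈ Icc 0 T := ⟨hs.trans hsu, hu⟩
  have hfreeze : ∀ t ∈ Icc s u, x t ⬝ᵥ g t ≤ x t ⬝ᵥ g u + ε := fun t ht => by
    have htI : t ∈ Icc 0 T := ⟨hs.trans ht.1, ht.2.trans hu⟩
    have hdist : dist (g t) (g u) ≤ ε := hδg t htI u huI <| by
      rw [Real.dist_eq, abs_sub_comm, abs_of_nonneg (by linarith [ht.2])]
      linarith [ht.1]
    have := dotProduct_le_norm_of_mem_stdSimplex (hxs t htI) (g t - g u)
    rw [dotProduct_sub, ← dist_eq_norm] at this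
    linarith
  have hconcave : (cumX x u - cumX x s) ⬝ᵥ g u
      ≤ mwuPotential η (cumX x u ᵥ* A) - mwuPotential η (cumX x s ᵥ* A) := by
    have h := mwuPotential_sub_le hη (cumX x u ᵥ* A) (cumX x s ᵥ* A)
    rw [← sub_vecMul, dotProduct_comm, ← dotProduct_mulVec] at h
    rw [← neg_sub, neg_dotProduct]
    linarith
  calc ∫ t in s..u, x t ⬝ᵥ g t ≤ ∫ t in s..u, (x t ⬝ᵥ g u + ε) :=
        intervalIntegral.integral_mono_on hsu (hint hsI huI)
          ((intervalIntegrable_dotProduct hx hxs hsI huI continuousOn_const).add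
            intervalIntegrable_const) hfreeze
    _ = (cumX x u - cumX x s) ⬝ᵥ g u + ε * (u - s) := by
        rw [intervalIntegral.integral_add
            (intervalIntegrable_dotProduct hx hxs hsI huI continuousOn_const)
            intervalIntegrable_const,
          integral_dotProduct_const hx hxs (g u) hsI huI, intervalIntegral.integral_const,
          smul_eq_mul, mul_comm]
    _ ≤ _ := by linarith

lemma integral_dotProduct_mwuStrategy_le_sum (hη : 0 < η) (A : Matrix (Fin n) κ ℝ) {T : ℕ}
    {x : ℝ → Fin n → ℝ} (hx : Measurable x)
    (hxs : ∀ t ∈ Icc 0 (T : ℝ), x t ∈ stdSimplex ℝ (Fin n)) {z : Fin n → ℝ}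
    (hxz : cumX x T = (T : ℝ) • z) :
    ∫ t in (0 : ℝ)..T, x t ⬝ᵥ A *ᵥ mwuStrategy η (cumX x t ᵥ* A)
      ≤ ∑ t ∈ Finset.range T, mwuStrategy η ((t : ℝ) • (z ᵥ* A)) ⬝ᵥ (z ᵥ* A) :=
  calc _ ≤ mwuPotential η (cumX x T ᵥ* A) - mwuPotential η (0 : κ → ℝ) :=
        integral_dotProduct_mwuStrategy_le hη A T.cast_nonneg hx hxs
    _ = mwuPotential η ((T : ℝ) • (z ᵥ* A)) - mwuPotential η (0 : κ → ℝ) := by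
        rw [hxz, smul_vecMul]
    _ ≤ _ := mwuPotential_natCast_smul_sub_le_sum hη _ T

end Rewards

section Bridges

variable {n m : ℕ} {η : ℝ} {A : Matrix (Fin n) (Fin m) ℝ}

lemma contPlay_zero (x : ℝ → Fin n → ℝ) (t : ℝ) :
    contPlay η A (fun _ => 0) x t = mwuStrategy η (cumX x t ᵥ* A) := by
  funext i
  simp [contPlay, mwuStrategy, softmax, vecMul, dotProduct]

lemma Rcont_zero (T : ℝ) (x : ℝ → Fin n → ℝ) :
    Rcont η A (fun _ => 0) T x
      = ∫ t in (0 : ℝ)..T, x t ⬝ᵥ A *ᵥ mwuStrategy η (cumX x t ᵥ* A) := by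
  simp only [Rcont, contPlay_zero, dotProduct, mulVec, Finset.mul_sum, mul_assoc]

lemma discPlay_zero_const (z : Fin n → ℝ) (t : ℕ) :
    discPlay η A (fun _ => 0) (fun _ => z) t = mwuStrategy η ((t : ℝ) • (z ᵥ* A)) := by
  funext i
  simp [discPlay, mwuStrategy, softmax, vecMul, dotProduct]

lemma Rdisc_zero_const (T : ℕ) (z : Fin n → ℝ) :
    Rdisc η A (fun _ => 0) T (fun _ => z)
      = ∑ t ∈ Finset.range T, mwuStrategy η ((t : ℝ) • (z ᵥ* A)) ⬝ᵥ (z ᵥ* A) := by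
  refine Finset.sum_congr rfl fun t _ => ?_
  rw [discPlay_zero_const, dotProduct_comm, ← dotProduct_mulVec]
  simp only [dotProduct, mulVec, Finset.mul_sum, mul_assoc]

lemma discPlay_eq_softmax (h0 : Fin m → ℝ) (x : ℕ → Fin n → ℝ) (t : ℕ) :
    discPlay η A h0 x t = softmax fun j => η * (h0 j - ∑ s ∈ Finset.range t, ∑ k, x s k * A k j) :=
  rfl

lemma Rdisc_le_mul_sum_abs (h0 : Fin m → ℝ) (T : ℕ) {x : ℕ → Fin n → ℝ}
    (hx : ∀ t, x t ∈ stdSimplex ℝ (Fin n)) :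
    Rdisc η A h0 T x ≤ T * ∑ k, ∑ i, |A k i| := by
  calc Rdisc η A h0 T x ≤ ∑ _t ∈ Finset.range T, ∑ k, ∑ i, |A k i| :=
        Finset.sum_le_sum fun t _ => Finset.sum_le_sum fun k _ => Finset.sum_le_sum fun i _ => ?_
    _ = T * ∑ k, ∑ i, |A k i| := by rw [Finset.sum_const, Finset.card_range, nsmul_eq_mul]
  have hxk := mem_Icc_of_mem_stdSimplex (hx t) k
  have hp : discPlay η A h0 x t i ∈ Icc (0 : ℝ) 1 := by
    rw [discPlay_eq_softmax]
    exact ⟨softmax_nonneg _ i, softmax_le_one _ i⟩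
  calc x t k * A k i * discPlay η A h0 x t i ≤ |x t k * A k i * discPlay η A h0 x t i| :=
        le_abs_self _
    _ = x t k * |A k i| * discPlay η A h0 x t i := by
        rw [abs_mul, abs_mul, abs_of_nonneg hxk.1, abs_of_nonneg hp.1]
    _ ≤ 1 * |A k i| * 1 := by
        gcongr
        exacts [hp.1, hxk.2, hp.2]
    _ = |A k i| := by ring

end Bridges

theorem stmt5_general {n m : ℕ} (hn : 0 < n) (η : ℝ) (hη : 0 < η)
    (A : Matrix (Fin n) (Fin m) ℝ) (T : ℕ) :
    (∀ x ∈ stdSimplex ℝ (Fin n),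
      (∫ t in (0:ℝ)..(T:ℝ),
          (∑ i, Real.exp (-(η * t * (∑ k, x k * A k i))) * (∑ k, x k * A k i)) /
            (∑ i, Real.exp (-(η * t * (∑ k, x k * A k i)))))
        ≤ ∑ t ∈ Finset.range T,
            (∑ i, Real.exp (-(η * (t : ℝ) * (∑ k, x k * A k i))) * (∑ k, x k * A k i)) /
              (∑ i, Real.exp (-(η * (t : ℝ) * (∑ k, x k * A k i))))) ∧
    RcontStar η A (fun _ => 0) (T : ℝ) ≤ RdiscStar η A (fun _ => 0) T := by
  refine ⟨fun z hz => ?_, ?_⟩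
  · have h := integral_dotProduct_mwuStrategy_le_sum hη A measurable_const (fun _ _ => hz)
      (cumX_const z T)
    simp only [cumX_const, smul_vecMul, dotProduct_mulVec z, dotProduct_comm (z ᵥ* A),
      mwuStrategy_smul_dotProduct] at h
    exact h
  · have hbdd : BddAbove {r | ∃ x : ℕ → Fin n → ℝ, (∀ t, x t ∈ stdSimplex ℝ (Fin n)) ∧
        r = Rdisc η A (fun _ => 0) T x} :=
      ⟨T * ∑ k, ∑ i, |A k i|, by rintro r ⟨x, hx, rfl⟩; exact Rdisc_le_mul_sum_abs _ T hx⟩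
    refine csSup_le ⟨_, fun _ => Pi.single ⟨0, hn⟩ 1, measurable_const,
      fun _ _ => single_mem_stdSimplex ℝ _, rfl⟩ ?_
    rintro r ⟨x, hx, hxs, rfl⟩
    obtain ⟨z, hz, hxz⟩ := exists_cumX_eq_smul hx hxs T.cast_nonneg
    calc Rcont η A (fun _ => 0) T x
        ≤ ∑ t ∈ Finset.range T, mwuStrategy η ((t : ℝ) • (z ᵥ* A)) ⬝ᵥ (z ᵥ* A) :=
          Rcont_zero T x ▸ integral_dotProduct_mwuStrategy_le_sum hη A hx hxs hxz
      _ = Rdisc η A (fun _ => 0) T (fun _ => z) := (Rdisc_zero_const T z).symm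
      _ ≤ RdiscStar η A (fun _ => 0) T := le_csSup hbdd ⟨_, fun _ => hz, rfl⟩

/-- for every `x ∈ Δ_n`, the discrete-time reward of the constant
strategy `x` (the sum `Σ_{t<T} f(t)`) is at least the continuous-time reward of the
constant strategy `x` (the integral `∫_0^T f`), where
`f(t) = (Σ_i exp(−ηt·xᵀAe_i)·xᵀAe_i)/(Σ_i exp(−ηt·xᵀAe_i))`; consequently
`R*_disc(0,T) ≥ R*_cont(0,T)`. -/
theorem stmt5 {n m : ℕ} (hn : 0 < n) (hm : 0 < m) (η : ℝ) (hη : 0 < η)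
    (A : Matrix (Fin n) (Fin m) ℝ) (T : ℕ) :
    (∀ x ∈ stdSimplex ℝ (Fin n),
      (∫ t in (0:ℝ)..(T:ℝ),
          (∑ i, Real.exp (-(η * t * (∑ k, x k * A k i))) * (∑ k, x k * A k i)) /
            (∑ i, Real.exp (-(η * t * (∑ k, x k * A k i)))))
        ≤ ∑ t ∈ Finset.range T,
            (∑ i, Real.exp (-(η * (t : ℝ) * (∑ k, x k * A k i))) * (∑ k, x k * A k i)) /
              (∑ i, Real.exp (-(η * (t : ℝ) * (∑ k, x k * A k i))))) ∧
    RcontStar η A (fun _ => 0) (T : ℝ) ≤ RdiscStar η A (fun _ => 0) T :=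
  stmt5_general hn η hη A T
end

section
/- Fix η > 0, T ∈ ℕ, and a matrix A ∈ ℝ^{n×m} all of whose entries lie in [−1, 1] (zero-sum game, learner matrix −A). Then the optimal discrete-time reward against an MWU learner with step η exceeds the optimal continuous-time reward against the Replicator Dynamics with parameter η by at most η·T/2: R*_disc(0, T) − R*_cont(0, T) ≤ η·T/2. -/
open MeasureTheory

/-!
Play a discrete strategy `x` in continuous time as the step function `t ↦ x ⌊t⌋₊`. During
round `s` the learner's logits then move linearly in `t`, so the optimizer's instantaneous reward
is the mean of `v = x s ᵥ* A` under the weights `exp (a i - η (t - s) v i)`, which at `t = s` is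
exactly the MWU reward of round `s`. The derivative of such a tilted mean in `τ` is minus the
variance of `v`, hence at least `-1` since `|v i| ≤ 1`. So within a round the continuous reward
falls below the discrete one by at most `η (t - s)`, and its integral over the round by at most
`η / 2`; summing over the `T` rounds gives the bound, and `R*_cont` is finite because every
continuous reward is at most `T`.
-/

section

open Finset Matrix

variable {ι : Type*} [Fintype ι]

noncomputable def tiltedMean (a v : ι → ℝ) (τ : ℝ) : ℝ :=
  (∑ i, v i * Real.exp (a i - τ * v i)) / ∑ i, Real.exp (a i - τ * v i)

lemma sum_exp_pos_s10 [Nonempty ι] (b : ι → ℝ) : 0 < ∑ i, Real.exp (b i) :=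
  Finset.sum_pos (fun _ _ => Real.exp_pos _) univ_nonempty

lemma hasDerivAt_tiltedMean [Nonempty ι] (a v : ι → ℝ) (τ : ℝ) :
    HasDerivAt (tiltedMean a v)
      (tiltedMean a v τ ^ 2 -
        (∑ i, v i ^ 2 * Real.exp (a i - τ * v i)) / ∑ i, Real.exp (a i - τ * v i)) τ := by
  have hw : ∀ i, HasDerivAt (fun σ => Real.exp (a i - σ * v i))
      (-(v i * Real.exp (a i - τ * v i))) τ := fun i => by
    convert ((hasDerivAt_id' τ).mul_const (v i)).const_sub (a i) |>.exp using 1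
    ring
  have hN := HasDerivAt.fun_sum fun i (_ : i ∈ univ) => (hw i).const_mul (v i)
  have hD := HasDerivAt.fun_sum fun i (_ : i ∈ univ) => hw i
  have hD0 := (sum_exp_pos_s10 fun i => a i - τ * v i).ne'
  refine (hN.div hD hD0).congr_deriv ?_
  simp only [tiltedMean, mul_neg, Finset.sum_neg_distrib, ← mul_assoc, ← sq]
  generalize ∑ i, v i ^ 2 * Real.exp (a i - τ * v i) = Q
  generalize ∑ i, v i * Real.exp (a i - τ * v i) = N
  field_simp
  ring

lemma continuous_tiltedMean [Nonempty ι] (a v : ι → ℝ) : Continuous (tiltedMean a v) :=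
  continuous_iff_continuousAt.2 fun τ => (hasDerivAt_tiltedMean a v τ).continuousAt

lemma tiltedMean_sub_le [Nonempty ι] {a v : ι → ℝ} (hv : ∀ i, |v i| ≤ 1) {σ τ : ℝ}
    (hστ : σ ≤ τ) : tiltedMean a v σ - tiltedMean a v τ ≤ τ - σ := by
  have hderiv : ∀ ρ, -1 ≤ deriv (tiltedMean a v) ρ := fun ρ => by
    rw [(hasDerivAt_tiltedMean a v ρ).deriv]
    have hQD : ∑ i, v i ^ 2 * Real.exp (a i - ρ * v i) ≤ ∑ i, Real.exp (a i - ρ * v i) :=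
      sum_le_sum fun i _ => mul_le_of_le_one_left (Real.exp_pos _).le
        ((sq_le_one_iff_abs_le_one _).2 (hv i))
    have := (div_le_one (sum_exp_pos_s10 fun i => a i - ρ * v i)).2 hQD
    nlinarith [sq_nonneg (tiltedMean a v ρ)]
  have := mul_sub_le_image_sub_of_le_deriv
    (fun ρ => (hasDerivAt_tiltedMean a v ρ).differentiableAt) hderiv hστ
  linarith

end

open MeasureTheory intervalIntegral in
lemma sub_half_le_integral_of_sub_le {f : ℝ → ℝ} {L : ℝ}
    (hf : IntervalIntegrable f volume 0 1) (h : ∀ τ ∈ Set.Icc (0 : ℝ) 1, f 0 - f τ ≤ L * τ) :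
    f 0 - L / 2 ≤ ∫ τ in (0 : ℝ)..1, f τ := by
  have hlin := (continuous_const_mul L).intervalIntegrable (μ := volume) 0 1
  calc f 0 - L / 2 = ∫ τ in (0 : ℝ)..1, (f 0 - L * τ) := by
        rw [integral_sub intervalIntegrable_const hlin, intervalIntegral.integral_const_mul,
          integral_id, intervalIntegral.integral_const]
        norm_num
        ring
    _ ≤ ∫ τ in (0 : ℝ)..1, f τ :=
        integral_mono_on zero_le_one (intervalIntegrable_const.sub hlin) hf
          fun τ hτ => by linarith [h τ hτ]

section StepExtension

open MeasureTheory intervalIntegral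

noncomputable def stepExtension {α : Type*} (x : ℕ → α) (t : ℝ) : α := x ⌊t⌋₊

lemma measurable_stepExtension {α : Type*} [MeasurableSpace α] (x : ℕ → α) :
    Measurable (stepExtension x) :=
  measurable_from_nat.comp Nat.measurable_floor

lemma floor_ae_eq_of_le (s : ℕ) {t : ℝ} (hst : s ≤ t) (hts : t ≤ s + 1) :
    ∀ᵐ u ∂volume, u ∈ Set.uIoc (s : ℝ) t → ⌊u⌋₊ = s := by
  filter_upwards [Measure.ae_ne volume ((s : ℝ) + 1)] with u hne hu
  rw [Set.uIoc_of_le hst] at hu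
  exact Nat.floor_eq_on_Ico s u ⟨hu.1.le, lt_of_le_of_ne (hu.2.trans hts) hne⟩

variable (f : ℕ → ℝ)

lemma intervalIntegrable_floor_comp (s : ℕ) {t : ℝ} (hst : s ≤ t) (hts : t ≤ s + 1) :
    IntervalIntegrable (fun u => f ⌊u⌋₊) volume s t := by
  refine (intervalIntegrable_const (c := f s)).congr_ae ?_
  filter_upwards [(ae_restrict_iff' measurableSet_uIoc).2 (floor_ae_eq_of_le s hst hts)]
    with u hu
  rw [hu]

lemma integral_floor_comp (s : ℕ) {t : ℝ} (hst : s ≤ t) (hts : t ≤ s + 1) :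
    ∫ u in (s : ℝ)..t, f ⌊u⌋₊ = (t - s) * f s := by
  rw [integral_congr_ae ((floor_ae_eq_of_le s hst hts).mono fun u hu h => by rw [hu h]),
    intervalIntegral.integral_const, smul_eq_mul]

lemma integral_zero_natCast_floor_comp (s : ℕ) :
    ∫ u in (0 : ℝ)..s, f ⌊u⌋₊ = ∑ u ∈ Finset.range s, f u := by
  have hunit : ∀ u : ℕ, (u : ℝ) ≤ u + 1 := fun u => by linarith
  rw [← Nat.cast_zero, ← sum_integral_adjacent_intervals fun u _ => by
    push_cast; exact intervalIntegrable_floor_comp f u (hunit u) le_rfl]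
  refine Finset.sum_congr rfl fun u _ => ?_
  push_cast
  rw [integral_floor_comp f u (hunit u) le_rfl, add_sub_cancel_left, one_mul]

lemma integral_zero_floor_comp (s : ℕ) {t : ℝ} (hst : s ≤ t) (hts : t ≤ s + 1) :
    ∫ u in (0 : ℝ)..t, f ⌊u⌋₊ = ∑ u ∈ Finset.range s, f u + (t - s) * f s := by
  have h0s : IntervalIntegrable (fun u => f ⌊u⌋₊) volume 0 s := by
    rw [← Nat.cast_zero]
    exact IntervalIntegrable.trans_iterate fun u _ => by
      push_cast; exact intervalIntegrable_floor_comp f u (by linarith) le_rfl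
  rw [← integral_add_adjacent_intervals h0s (intervalIntegrable_floor_comp f s hst hts),
    integral_zero_natCast_floor_comp, integral_floor_comp f s hst hts]

end StepExtension

section Game

open Finset Matrix MeasureTheory intervalIntegral

lemma abs_vecMul_le_one {ι κ : Type*} [Fintype ι] {p : ι → ℝ} (hp : p ∈ stdSimplex ℝ ι)
    {A : Matrix ι κ ℝ} (hA : ∀ k i, A k i ∈ Set.Icc (-1 : ℝ) 1) (i : κ) : |(p ᵥ* A) i| ≤ 1 :=
  calc |(p ᵥ* A) i| ≤ ∑ k, |p k * A k i| := abs_sum_le_sum_abs _ _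
    _ ≤ ∑ k, p k := sum_le_sum fun k _ => by
        rw [abs_mul, abs_of_nonneg (hp.1 k)]
        exact mul_le_of_le_one_right (hp.1 k) (abs_le.2 (hA k i))
    _ = 1 := hp.2

lemma abs_sum_mul_le_one {ι κ : Type*} [Fintype ι] [Fintype κ] {p : ι → ℝ} {q : κ → ℝ}
    (hp : p ∈ stdSimplex ℝ ι) (hq : q ∈ stdSimplex ℝ κ) {A : Matrix ι κ ℝ}
    (hA : ∀ k i, A k i ∈ Set.Icc (-1 : ℝ) 1) : |∑ k, ∑ i, p k * A k i * q i| ≤ 1 := by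
  have hvec : ∑ k, ∑ i, p k * A k i * q i = ∑ i, (p ᵥ* A) i * q i := by
    rw [sum_comm]; simp only [vecMul, dotProduct, sum_mul]
  calc |∑ k, ∑ i, p k * A k i * q i| ≤ ∑ i, |(p ᵥ* A) i * q i| := hvec ▸ abs_sum_le_sum_abs _ _
    _ ≤ ∑ i, q i := sum_le_sum fun i _ => by
        rw [abs_mul, abs_of_nonneg (hq.1 i)]
        exact mul_le_of_le_one_left (hq.1 i) (abs_vecMul_le_one hp hA i)
    _ = 1 := hq.2

lemma sum_mul_softmax_eq_tiltedMean {ι κ : Type*} [Fintype ι] [Fintype κ] (p : ι → ℝ)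
    (A : Matrix ι κ ℝ) (a : κ → ℝ) (τ : ℝ) :
    ∑ k, ∑ i, p k * A k i *
        (Real.exp (a i - τ * (p ᵥ* A) i) / ∑ j, Real.exp (a j - τ * (p ᵥ* A) j)) =
      tiltedMean a (p ᵥ* A) τ := by
  rw [tiltedMean, sum_comm, sum_div]
  refine sum_congr rfl fun i _ => ?_
  simp only [vecMul, dotProduct, sum_mul, sum_div, mul_div_assoc]

variable {n m : ℕ} {η : ℝ} {A : Matrix (Fin n) (Fin m) ℝ}

lemma contPlay_mem_stdSimplex (hm : 0 < m) (h0 : Fin m → ℝ) (x : ℝ → Fin n → ℝ) (t : ℝ) :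
    contPlay η A h0 x t ∈ stdSimplex ℝ (Fin m) := by
  have : Nonempty (Fin m) := ⟨⟨0, hm⟩⟩
  have hD := sum_exp_pos_s10 fun j => η * (h0 j - ∑ k, cumX x t k * A k j)
  refine ⟨fun i => div_nonneg (Real.exp_pos _).le hD.le, ?_⟩
  simp only [contPlay]
  rw [← sum_div, div_self hD.ne']

lemma Rcont_le (hm : 0 < m) (hA : ∀ k i, A k i ∈ Set.Icc (-1 : ℝ) 1) (h0 : Fin m → ℝ)
    {T : ℝ} (hT : 0 ≤ T) {x : ℝ → Fin n → ℝ}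
    (hx : ∀ t ∈ Set.Icc (0 : ℝ) T, x t ∈ stdSimplex ℝ (Fin n)) :
    Rcont η A h0 T x ≤ T := by
  have hbound := norm_integral_le_of_norm_le_const (C := 1)
    (f := fun t => ∑ k, ∑ i, x t k * A k i * contPlay η A h0 x t i) fun t ht => by
      rw [Set.uIoc_of_le hT] at ht
      exact abs_sum_mul_le_one (hx t (Set.Ioc_subset_Icc_self ht))
        (contPlay_mem_stdSimplex hm h0 x t) hA
  rw [one_mul, sub_zero, abs_of_nonneg hT] at hbound
  exact (le_abs_self _).trans hbound

lemma cumX_stepExtension (x : ℕ → Fin n → ℝ) (s : ℕ) {t : ℝ} (hst : s ≤ t) (hts : t ≤ s + 1) :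
    cumX (stepExtension x) t = ∑ u ∈ range s, x u + (t - s) • x s := by
  ext k
  simp only [cumX, stepExtension, Pi.add_apply, Finset.sum_apply, Pi.smul_apply, smul_eq_mul]
  exact integral_zero_floor_comp (fun u => x u k) s hst hts

lemma contReward_stepExtension_eq_tiltedMean (x : ℕ → Fin n → ℝ) (s : ℕ) {t : ℝ}
    (hst : s ≤ t) (hts : t ≤ s + 1) :
    ∑ k, ∑ i, x s k * A k i * contPlay η A (fun _ => 0) (stepExtension x) t i =
      tiltedMean (-η • ((∑ u ∈ range s, x u) ᵥ* A)) (x s ᵥ* A) (η * (t - s)) := by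
  have hlogit : ∀ j, η * (0 - ∑ k, cumX (stepExtension x) t k * A k j) =
      (-η • ((∑ u ∈ range s, x u) ᵥ* A)) j - η * (t - s) * (x s ᵥ* A) j := fun j => by
    change η * (0 - (cumX (stepExtension x) t ᵥ* A) j) = _
    rw [cumX_stepExtension x s hst hts, add_vecMul, smul_vecMul]
    simp only [Pi.add_apply, Pi.smul_apply, smul_eq_mul]
    ring
  simp only [contPlay, hlogit]
  exact sum_mul_softmax_eq_tiltedMean _ _ _ _

lemma discReward_eq_tiltedMean (x : ℕ → Fin n → ℝ) (s : ℕ) :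
    ∑ k, ∑ i, x s k * A k i * discPlay η A (fun _ => 0) x s i =
      tiltedMean (-η • ((∑ u ∈ range s, x u) ᵥ* A)) (x s ᵥ* A) 0 := by
  have hlogit : ∀ j, η * (0 - ∑ u ∈ range s, ∑ k, x u k * A k j) =
      (-η • ((∑ u ∈ range s, x u) ᵥ* A)) j - 0 * (x s ᵥ* A) j := fun j => by
    rw [sum_vecMul]
    simp only [Pi.smul_apply, Finset.sum_apply, smul_eq_mul, vecMul, dotProduct]
    ring
  simp only [discPlay, hlogit]
  exact sum_mul_softmax_eq_tiltedMean _ _ _ _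

lemma Rcont_stepExtension (hm : 0 < m) (x : ℕ → Fin n → ℝ) (T : ℕ) :
    Rcont η A (fun _ => 0) T (stepExtension x) =
      ∑ s ∈ range T, ∫ τ in (0 : ℝ)..1,
        tiltedMean (-η • ((∑ u ∈ range s, x u) ᵥ* A)) (x s ᵥ* A) (η * τ) := by
  have : Nonempty (Fin m) := ⟨⟨0, hm⟩⟩
  have hround : ∀ s : ℕ, ∀ᵐ t ∂volume, t ∈ Set.uIoc (s : ℝ) (s + 1) →
      ∑ k, ∑ i, stepExtension x t k * A k i * contPlay η A (fun _ => 0) (stepExtension x) t i =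
        tiltedMean (-η • ((∑ u ∈ range s, x u) ᵥ* A)) (x s ᵥ* A) (η * (t - s)) := fun s => by
    filter_upwards [floor_ae_eq_of_le s (by linarith) le_rfl] with t hfloor ht
    rw [stepExtension, hfloor ht]
    rw [Set.uIoc_of_le (by linarith)] at ht
    exact contReward_stepExtension_eq_tiltedMean x s ht.1.le ht.2
  have hint : ∀ s : ℕ, IntervalIntegrable (fun t => ∑ k, ∑ i, stepExtension x t k * A k i *
      contPlay η A (fun _ => 0) (stepExtension x) t i) volume s (s + 1) := fun s => by
    exact (((continuous_tiltedMean _ _).comp (by fun_prop)).intervalIntegrable _ _).congr_ae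
      (((ae_restrict_iff' measurableSet_uIoc).2 (hround s)).mono fun t ht => ht.symm)
  rw [Rcont, ← Nat.cast_zero, ← sum_integral_adjacent_intervals fun s _ => by
    push_cast; exact hint s]
  refine sum_congr rfl fun s _ => ?_
  push_cast
  rw [integral_congr_ae (hround s), integral_comp_sub_right
    (fun τ => tiltedMean (-η • ((∑ u ∈ range s, x u) ᵥ* A)) (x s ᵥ* A) (η * τ)),
    sub_self, add_sub_cancel_left]

lemma discReward_le_integral_add (hm : 0 < m) (hη : 0 ≤ η)
    (hA : ∀ k i, A k i ∈ Set.Icc (-1 : ℝ) 1) {x : ℕ → Fin n → ℝ} {s : ℕ}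
    (hx : x s ∈ stdSimplex ℝ (Fin n)) :
    ∑ k, ∑ i, x s k * A k i * discPlay η A (fun _ => 0) x s i ≤
      (∫ τ in (0 : ℝ)..1, tiltedMean (-η • ((∑ u ∈ range s, x u) ᵥ* A)) (x s ᵥ* A) (η * τ)) +
        η / 2 := by
  have : Nonempty (Fin m) := ⟨⟨0, hm⟩⟩
  rw [discReward_eq_tiltedMean]
  set a := -η • ((∑ u ∈ range s, x u) ᵥ* A)
  have h := sub_half_le_integral_of_sub_le (f := fun τ => tiltedMean a (x s ᵥ* A) (η * τ)) (L := η)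
    (((continuous_tiltedMean _ _).comp (continuous_const_mul η)).intervalIntegrable 0 1)
    fun τ hτ => by
      simpa using tiltedMean_sub_le (a := a) (abs_vecMul_le_one hx hA) (mul_nonneg hη hτ.1)
  simp only [mul_zero] at h
  linarith

lemma Rdisc_le_Rcont_stepExtension_add (hm : 0 < m) (hη : 0 ≤ η)
    (hA : ∀ k i, A k i ∈ Set.Icc (-1 : ℝ) 1) {x : ℕ → Fin n → ℝ}
    (hx : ∀ t, x t ∈ stdSimplex ℝ (Fin n)) (T : ℕ) :
    Rdisc η A (fun _ => 0) T x ≤ Rcont η A (fun _ => 0) T (stepExtension x) + η * T / 2 := by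
  rw [Rcont_stepExtension hm, Rdisc]
  calc _ ≤ ∑ s ∈ range T, ((∫ τ in (0 : ℝ)..1,
        tiltedMean (-η • ((∑ u ∈ range s, x u) ᵥ* A)) (x s ᵥ* A) (η * τ)) + η / 2) :=
        sum_le_sum fun s _ => discReward_le_integral_add hm hη hA (hx s)
    _ = _ := by rw [sum_add_distrib, sum_const, card_range, nsmul_eq_mul]; ring

end Game

/-- if all entries of `A` lie in `[−1,1]`, then
`R*_disc(0,T) − R*_cont(0,T) ≤ η·T/2`. -/
theorem stmt10 {n m : ℕ} (hn : 0 < n) (hm : 0 < m) (η : ℝ) (hη : 0 < η) (T : ℕ)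
    (A : Matrix (Fin n) (Fin m) ℝ) (hA : ∀ k i, A k i ∈ Set.Icc (-1 : ℝ) 1) :
    RdiscStar η A (fun _ => 0) T - RcontStar η A (fun _ => 0) (T : ℝ) ≤ η * T / 2 := by
  have hbdd : BddAbove {r | ∃ x : ℝ → Fin n → ℝ, Measurable x ∧
      (∀ t ∈ Set.Icc (0 : ℝ) T, x t ∈ stdSimplex ℝ (Fin n)) ∧
      r = Rcont η A (fun _ => 0) T x} :=
    ⟨T, by rintro _ ⟨x, -, hx, rfl⟩; exact Rcont_le hm hA _ T.cast_nonneg hx⟩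
  suffices RdiscStar η A (fun _ => 0) T ≤ RcontStar η A (fun _ => 0) T + η * T / 2 by linarith
  refine csSup_le ⟨_, fun _ => (if ⟨0, hn⟩ = · then 1 else 0),
    fun _ => ite_eq_mem_stdSimplex ℝ _, rfl⟩ ?_
  rintro _ ⟨x, hx, rfl⟩
  calc Rdisc η A (fun _ => 0) T x
      ≤ Rcont η A (fun _ => 0) T (stepExtension x) + η * T / 2 :=
        Rdisc_le_Rcont_stepExtension_add hm hη.le hA hx T
    _ ≤ RcontStar η A (fun _ => 0) T + η * T / 2 := by
        gcongr
        exact le_csSup hbdd ⟨_, measurable_stepExtension x, fun t _ => hx _, rfl⟩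
end
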